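/- arXiv:2303.07340 — 4 statements merged into one kernel-verified Lean document; each statement's English description precedes it below -/
import Mathlib

section
/- For every 2×2 complex matrix ρ, ρ equals the sum over i ∈ {1,2} and j ∈ {0,1} of Tr[Uᵢ|j⟩⟨j|Uᵢ† ρ]·Uᵢ|j⟩⟨j|Uᵢ†, minus the sum over j ∈ {0,1} of Tr[|j⟩⟨j| ρ]·X|j⟩⟨j|X, where U₁ = H (Hadamard) and U₂ = SH (phase gate times Hadamard). -/
open Matrix

noncomputable def PauliX : Matrix (Fin 2) (Fin 2) ℂ := !![0, 1; 1, 0]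

/-- The Hadamard gate. -/
noncomputable def Hgate : Matrix (Fin 2) (Fin 2) ℂ :=
  ((Real.sqrt 2 : ℂ))⁻¹ • !![1, 1; 1, -1]

/-- The phase gate. -/
noncomputable def Sgate : Matrix (Fin 2) (Fin 2) ℂ := !![1, 0; 0, Complex.I]

/-- `U 0 = H`, `U 1 = S·H`. -/
noncomputable def Ugate : Fin 2 → Matrix (Fin 2) (Fin 2) ℂ := ![Hgate, Sgate * Hgate]

/-- The projector `|j⟩⟨j|` on the computational basis state `j`. -/
noncomputable def ketbra (j : Fin 2) : Matrix (Fin 2) (Fin 2) ℂ :=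
  Matrix.single j j 1

private lemma kb0 : ketbra 0 = !![1,0;0,0] := by
  ext i j; fin_cases i <;> fin_cases j <;> simp [ketbra, Matrix.single]

private lemma kb1 : ketbra 1 = !![0,0;0,1] := by
  ext i j; fin_cases i <;> fin_cases j <;> simp [ketbra, Matrix.single]

private lemma h2 : ((Real.sqrt 2 : ℂ))⁻¹ * ((Real.sqrt 2 : ℂ))⁻¹ = 2⁻¹ := by
  rw [← mul_inv]
  norm_num [← Complex.ofReal_mul, Real.mul_self_sqrt]

private lemma h2' : (((Real.sqrt 2 : ℂ))⁻¹)^2 = 2⁻¹ := by rw [sq, h2]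

private lemma U00 : Ugate 0 * ketbra 0 * (Ugate 0)ᴴ = (2:ℂ)⁻¹ • !![1,1;1,1] := by
  rw [kb0]
  ext i j
  fin_cases i <;> fin_cases j <;>
    simp [Ugate, Hgate, Matrix.mul_apply, Fin.sum_univ_two, Matrix.conjTranspose_apply] <;>
    ring_nf <;> rw [h2'] <;> norm_num

private lemma U01 : Ugate 0 * ketbra 1 * (Ugate 0)ᴴ = (2:ℂ)⁻¹ • !![1,-1;-1,1] := by
  rw [kb1]
  ext i j
  fin_cases i <;> fin_cases j <;>
    simp [Ugate, Hgate, Matrix.mul_apply, Fin.sum_univ_two, Matrix.conjTranspose_apply] <;>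
    ring_nf <;> rw [h2'] <;> norm_num

private lemma U10 : Ugate 1 * ketbra 0 * (Ugate 1)ᴴ = (2:ℂ)⁻¹ • !![1,-Complex.I;Complex.I,1] := by
  rw [kb0]
  ext i j
  fin_cases i <;> fin_cases j <;>
    simp [Ugate, Hgate, Sgate, Matrix.mul_apply, Fin.sum_univ_two, Matrix.conjTranspose_apply] <;>
    ring_nf <;> rw [h2'] <;> norm_num [Complex.I_sq, mul_comm]

private lemma U11 : Ugate 1 * ketbra 1 * (Ugate 1)ᴴ = (2:ℂ)⁻¹ • !![1,Complex.I;-Complex.I,1] := by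
  rw [kb1]
  ext i j
  fin_cases i <;> fin_cases j <;>
    simp [Ugate, Hgate, Sgate, Matrix.mul_apply, Fin.sum_univ_two, Matrix.conjTranspose_apply] <;>
    ring_nf <;> rw [h2'] <;> norm_num [Complex.I_sq, mul_comm]

private lemma X0 : PauliX * ketbra 0 * PauliX = !![0,0;0,1] := by
  rw [kb0]
  ext i j
  fin_cases i <;> fin_cases j <;> simp [PauliX, Matrix.mul_apply, Fin.sum_univ_two]

private lemma X1 : PauliX * ketbra 1 * PauliX = !![1,0;0,0] := by
  rw [kb1]
  ext i j
  fin_cases i <;> fin_cases j <;> simp [PauliX, Matrix.mul_apply, Fin.sum_univ_two]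


/-- The doubly optimal 1-wire cutting decomposition:
`ρ = Σ_{i=1,2} Σ_j Tr[Uᵢ|j⟩⟨j|Uᵢ† ρ]·Uᵢ|j⟩⟨j|Uᵢ† − Σ_j Tr[|j⟩⟨j| ρ]·X|j⟩⟨j|X`. -/
theorem one_wire_cut_decomposition (ρ : Matrix (Fin 2) (Fin 2) ℂ) :
    ρ = (∑ i : Fin 2, ∑ j : Fin 2,
          (Ugate i * ketbra j * (Ugate i)ᴴ * ρ).trace • (Ugate i * ketbra j * (Ugate i)ᴴ))
        - ∑ j : Fin 2, (ketbra j * ρ).trace • (PauliX * ketbra j * PauliX) := by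
  rw [Fin.sum_univ_two, Fin.sum_univ_two, Fin.sum_univ_two, Fin.sum_univ_two,
    U00, U01, U10, U11, X0, X1, kb0, kb1]
  ext i j
  fin_cases i <;> fin_cases j <;>
    simp [Matrix.mul_apply, Fin.sum_univ_two, Matrix.trace, Matrix.diag, Complex.ext_iff] <;>
    ring_nf <;> norm_num [Complex.I_sq]
end

section
/- The quasiprobability decomposition of the single-qubit identity channel Id(ρ) = Σᵢ cᵢ Tr[Eᵢ(ρ)]ρᵢ into single-qubit measure-and-prepare channels has γ = Σᵢ |cᵢ| ≥ 3; that is, the 1-norm of the coefficients in any such decomposition is at least 3. -/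
open Matrix
open scoped ComplexOrder

noncomputable def Px : Matrix (Fin 2) (Fin 2) ℂ := !![0,1;1,0]
noncomputable def Py : Matrix (Fin 2) (Fin 2) ℂ := !![0,-Complex.I;Complex.I,0]
noncomputable def Pz : Matrix (Fin 2) (Fin 2) ℂ := !![1,0;0,-1]

lemma cs_bound (p q P Q u v U V : ℝ) (hp : 0 ≤ p) (hq : 0 ≤ q) (hP : 0 ≤ P) (hQ : 0 ≤ Q)
    (h1 : u^2 + v^2 ≤ p*q) (h2 : U^2 + V^2 ≤ P*Q) (hPQ : P + Q = 1) :
    4*u*U + 4*v*V + (p - q)*(P - Q) ≤ p + q := by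
  have hprod : (u^2+v^2)*(U^2+V^2) ≤ (p*q)*(P*Q) :=
    mul_le_mul h1 h2 (by positivity) (by nlinarith)
  have key : (u*U + v*V)^2 ≤ ((p*Q + q*P)/2)^2 := by
    nlinarith [sq_nonneg (u*V - v*U), sq_nonneg (p*Q - q*P)]
  have hnn : 0 ≤ (p*Q + q*P)/2 := by positivity
  have h3 : u*U + v*V ≤ (p*Q + q*P)/2 := by nlinarith [key, hnn, sq_nonneg (u*U+v*V - (p*Q+q*P)/2)]
  have h4 : (p+q)*(P+Q) = p + q := by rw [hPQ]; ring
  nlinarith [h3, h4]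

lemma psd_facts {A : Matrix (Fin 2) (Fin 2) ℂ} (hA : A.PosSemidef) :
    (A 0 0).im = 0 ∧ (A 1 1).im = 0 ∧ 0 ≤ (A 0 0).re ∧ 0 ≤ (A 1 1).re ∧
    A 1 0 = starRingEnd ℂ (A 0 1) ∧
    (A 0 1).re^2 + (A 0 1).im^2 ≤ (A 0 0).re * (A 1 1).re := by
  have h00 := hA.dotProduct_mulVec_nonneg (Pi.single 0 1)
  have h11 := hA.dotProduct_mulVec_nonneg (Pi.single 1 1)
  simp [Matrix.mulVec, dotProduct, Fin.sum_univ_two, Pi.single_apply] at h00 h11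
  have herm : A 1 0 = starRingEnd ℂ (A 0 1) := by
    have := congrFun (congrFun hA.1 1) 0
    simpa [Matrix.conjTranspose_apply] using this.symm
  have hdet : (0:ℂ) ≤ A.det := by
    rw [hA.1.det_eq_prod_eigenvalues, Fin.prod_univ_two]
    exact mul_nonneg (RCLike.ofReal_nonneg.mpr (hA.eigenvalues_nonneg 0))
      (RCLike.ofReal_nonneg.mpr (hA.eigenvalues_nonneg 1))
  rw [Matrix.det_fin_two, herm] at hdet
  have h00' := Complex.le_def.mp h00
  have h11' := Complex.le_def.mp h11
  have hdet' := Complex.le_def.mp hdet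
  refine ⟨h00'.2.symm, h11'.2.symm, h00'.1, h11'.1, herm, ?_⟩
  have := hdet'.1
  simp [Complex.sub_re, Complex.mul_re, Complex.conj_re, Complex.conj_im,
    ← h00'.2, ← h11'.2] at this
  nlinarith [this]

lemma key_bound {A B : Matrix (Fin 2) (Fin 2) ℂ} (hA : A.PosSemidef) (hB : B.PosSemidef)
    (hBtr : B.trace = 1) :
    |((A * Px).trace * (Px * B).trace + (A * Py).trace * (Py * B).trace
      + (A * Pz).trace * (Pz * B).trace).re| ≤ A.trace.re := by
  obtain ⟨hA0, hA1, hAp, hAq, hA10, hAdet⟩ := psd_facts hA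
  obtain ⟨hB0, hB1, hBp, hBq, hB10, hBdet⟩ := psd_facts hB
  have htr : (B 0 0).re + (B 1 1).re = 1 := by
    have := congrArg Complex.re hBtr
    simpa [Matrix.trace_fin_two, Complex.add_re] using this
  have hre : ((A * Px).trace * (Px * B).trace + (A * Py).trace * (Py * B).trace
      + (A * Pz).trace * (Pz * B).trace).re =
      4*(A 0 1).re*(B 0 1).re + 4*(A 0 1).im*(B 0 1).im
      + ((A 0 0).re - (A 1 1).re)*((B 0 0).re - (B 1 1).re) := by
    simp [Px, Py, Pz, Matrix.trace_fin_two, Matrix.mul_apply, Matrix.vecMul, dotProduct,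
      Fin.sum_univ_two, hA10, hB10, hA0, hA1, hB0, hB1,
      Complex.add_re, Complex.mul_re, Complex.mul_im, Complex.add_im]
    ring
  rw [hre]
  have htrA : A.trace.re = (A 0 0).re + (A 1 1).re := by
    simp [Matrix.trace_fin_two, Complex.add_re]
  rw [htrA, abs_le]
  constructor
  · have := cs_bound (A 1 1).re (A 0 0).re (B 0 0).re (B 1 1).re
      (-(A 0 1).re) (-(A 0 1).im) (B 0 1).re (B 0 1).im hAq hAp hBp hBq
      (by nlinarith [hAdet]) hBdet htr
    nlinarith [this]
  · exact cs_bound _ _ _ _ _ _ _ _ hAp hAq hBp hBq hAdet hBdet htr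

/-- Sampling-overhead lower bound for single-qubit wire cutting:
if the identity channel on 2×2 matrices is decomposed as
`ρ = Σᵢ cᵢ Σ_μ a_{iμ} Tr[E_{iμ} ρ] ρ_{iμ}`, where each `{E_{iμ}}_μ` is a POVM,
each `a_{iμ} ∈ {+1,−1}` and each `ρ_{iμ}` is a density matrix (a measure-and-prepare
channel decomposition), then `Σᵢ |cᵢ| ≥ 3`. -/
theorem one_qubit_wire_cut_gamma_lower_bound
    (m : ℕ) (c : Fin m → ℝ)
    (d : Fin m → ℕ)
    (a : ∀ i : Fin m, Fin (d i) → ℝ)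
    (ha : ∀ i μ, a i μ = 1 ∨ a i μ = -1)
    (E : ∀ i : Fin m, Fin (d i) → Matrix (Fin 2) (Fin 2) ℂ)
    (hEpos : ∀ i μ, (E i μ).PosSemidef)
    (hEsum : ∀ i, ∑ μ, E i μ = 1)
    (ρs : ∀ i : Fin m, Fin (d i) → Matrix (Fin 2) (Fin 2) ℂ)
    (hρpos : ∀ i μ, (ρs i μ).PosSemidef)
    (hρtr : ∀ i μ, (ρs i μ).trace = 1)
    (hdecomp : ∀ ρ : Matrix (Fin 2) (Fin 2) ℂ,
      ρ = ∑ i, (c i : ℂ) • ∑ μ, (a i μ : ℂ) • ((E i μ * ρ).trace • ρs i μ)) :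
    3 ≤ ∑ i, |c i| := by
  classical
  -- complex Pauli equations
  have paul : ∀ σ : Matrix (Fin 2) (Fin 2) ℂ,
      (σ * σ).trace = ∑ i, (c i : ℂ) * ∑ μ, (a i μ : ℂ) *
        ((E i μ * σ).trace * (σ * ρs i μ).trace) := by
    intro σ
    have h := congrArg (fun M => (σ * M).trace) (hdecomp σ)
    simpa [Matrix.mul_sum, Matrix.trace_sum, Matrix.mul_smul, Matrix.trace_smul,
      smul_eq_mul, mul_assoc, mul_left_comm, mul_comm] using h
  set G : ∀ i : Fin m, Fin (d i) → ℂ := fun i μ =>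
    (E i μ * Px).trace * (Px * ρs i μ).trace + (E i μ * Py).trace * (Py * ρs i μ).trace
      + (E i μ * Pz).trace * (Pz * ρs i μ).trace with hG
  have hPx2 : (Px * Px).trace = 2 := by
    norm_num [Px, Matrix.trace_fin_two, Matrix.mul_apply, Fin.sum_univ_two]
  have hPy2 : (Py * Py).trace = 2 := by
    norm_num [Py, Matrix.trace_fin_two, Matrix.mul_apply, Fin.sum_univ_two, Complex.I_mul_I]
  have hPz2 : (Pz * Pz).trace = 2 := by
    norm_num [Pz, Matrix.trace_fin_two, Matrix.mul_apply, Fin.sum_univ_two]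
  have key6 : (6:ℂ) = ∑ i, (c i : ℂ) * ∑ μ, (a i μ : ℂ) * G i μ := by
    have hx := paul Px; have hy := paul Py; have hz := paul Pz
    rw [hPx2] at hx; rw [hPy2] at hy; rw [hPz2] at hz
    have h6 : (6:ℂ) = (∑ i, (c i : ℂ) * ∑ μ, (a i μ : ℂ) * ((E i μ * Px).trace * (Px * ρs i μ).trace))
        + (∑ i, (c i : ℂ) * ∑ μ, (a i μ : ℂ) * ((E i μ * Py).trace * (Py * ρs i μ).trace))
        + (∑ i, (c i : ℂ) * ∑ μ, (a i μ : ℂ) * ((E i μ * Pz).trace * (Pz * ρs i μ).trace)) := by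
      rw [← hx, ← hy, ← hz]; norm_num
    rw [h6, ← Finset.sum_add_distrib, ← Finset.sum_add_distrib]
    refine Finset.sum_congr rfl fun i _ => ?_
    rw [← mul_add, ← mul_add, ← Finset.sum_add_distrib, ← Finset.sum_add_distrib]
    refine congrArg _ (Finset.sum_congr rfl fun μ _ => ?_)
    rw [hG]; ring
  have keyR : (6:ℝ) = ∑ i, c i * ∑ μ, a i μ * (G i μ).re := by
    have := congrArg Complex.re key6
    simpa [Complex.re_sum, Complex.re_ofReal_mul] using this
  have hbound : ∀ i, |∑ μ, a i μ * (G i μ).re| ≤ 2 := by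
    intro i
    have htrE : ∑ μ, ((E i μ).trace).re = 2 := by
      have := congrArg (fun M : Matrix (Fin 2) (Fin 2) ℂ => M.trace.re) (hEsum i)
      simpa [Matrix.trace_sum, Complex.re_sum, Matrix.trace_one] using this
    calc |∑ μ, a i μ * (G i μ).re| ≤ ∑ μ, |a i μ * (G i μ).re| :=
          Finset.abs_sum_le_sum_abs _ _
      _ ≤ ∑ μ, ((E i μ).trace).re := by
          refine Finset.sum_le_sum fun μ _ => ?_
          rw [abs_mul]
          have h1 : |a i μ| = 1 := by rcases ha i μ with h | h <;> simp [h]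
          rw [h1, one_mul]
          exact key_bound (hEpos i μ) (hρpos i μ) (hρtr i μ)
      _ = 2 := htrE
  have final : (6:ℝ) ≤ ∑ i, |c i| * 2 := by
    calc (6:ℝ) = ∑ i, c i * ∑ μ, a i μ * (G i μ).re := keyR
      _ ≤ |∑ i, c i * ∑ μ, a i μ * (G i μ).re| := le_abs_self _
      _ ≤ ∑ i, |c i * ∑ μ, a i μ * (G i μ).re| := Finset.abs_sum_le_sum_abs _ _
      _ ≤ ∑ i, |c i| * 2 := by
          refine Finset.sum_le_sum fun i _ => ?_
          rw [abs_mul]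
          exact mul_le_mul_of_nonneg_left (hbound i) (abs_nonneg _)
  rw [← Finset.sum_mul] at final
  linarith
end

section
/- If an n-qubit quantum channel Γ is decomposed as Γ = Σᵢ₌₁ᵐ cᵢ Eᵢ with real coefficients cᵢ, where each Eᵢ is a measure-and-prepare channel whose POVM has at most 2ⁿ elements, then m ≥ (Rank(S(Γ)) − 1)/(2ⁿ − 1), where S(Γ) is the transfer matrix of Γ. -/
open Matrix
open scoped ComplexOrder

/-- Lower bound on the number of measure-and-prepare channels in a quasiprobability
decomposition of an `n`-qubit quantum channel `Γ` (viewed as a linear map on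
`2ⁿ × 2ⁿ` matrices): if `Γ(ρ) = Σᵢ₌₁ᵐ cᵢ Σ_μ a_{iμ} Tr[E_{iμ} ρ] ρ_{iμ}` where each
POVM `{E_{iμ}}` has at most `2ⁿ` elements (no ancilla qubits), `a_{iμ} ∈ {±1}`, and
each `ρ_{iμ}` is a density matrix, then `Rank(S(Γ)) ≤ 1 + m(2ⁿ − 1)`, i.e.
`m ≥ (Rank(S(Γ)) − 1)/(2ⁿ − 1)`.  The rank of the transfer matrix `S(Γ)` is the rank
of `Γ` as a linear map. -/
theorem mp_channel_number_lower_bound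
    (n m : ℕ)
    (Γ : Matrix (Fin (2 ^ n)) (Fin (2 ^ n)) ℂ →ₗ[ℂ] Matrix (Fin (2 ^ n)) (Fin (2 ^ n)) ℂ)
    (c : Fin m → ℝ)
    (d : Fin m → ℕ) (hd : ∀ i, d i ≤ 2 ^ n)
    (a : ∀ i : Fin m, Fin (d i) → ℝ)
    (ha : ∀ i μ, a i μ = 1 ∨ a i μ = -1)
    (E : ∀ i : Fin m, Fin (d i) → Matrix (Fin (2 ^ n)) (Fin (2 ^ n)) ℂ)
    (hEpos : ∀ i μ, (E i μ).PosSemidef)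
    (hEsum : ∀ i, ∑ μ, E i μ = 1)
    (ρs : ∀ i : Fin m, Fin (d i) → Matrix (Fin (2 ^ n)) (Fin (2 ^ n)) ℂ)
    (hρpos : ∀ i μ, (ρs i μ).PosSemidef)
    (hρtr : ∀ i μ, (ρs i μ).trace = 1)
    (hdecomp : ∀ ρ : Matrix (Fin (2 ^ n)) (Fin (2 ^ n)) ℂ,
      Γ ρ = ∑ i, (c i : ℂ) • ∑ μ, (a i μ : ℂ) • ((E i μ * ρ).trace • ρs i μ)) :
    Module.finrank ℂ (LinearMap.range Γ) ≤ 1 + m * (2 ^ n - 1) := by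
  -- each POVM is nonempty
  have hdpos : ∀ i, 0 < d i := by
    intro i
    rcases Nat.eq_zero_or_pos (d i) with h | h
    · exfalso
      have h1 := hEsum i
      have hz : (∑ μ : Fin (d i), E i μ) = 0 := by
        rw [Finset.sum_eq_zero]
        intro μ _
        exact absurd μ.2 (by omega)
      rw [hz] at h1
      have h2n : 0 < 2 ^ n := Nat.pow_pos (by norm_num)
      have := congrFun (congrFun h1 ⟨0, h2n⟩) ⟨0, h2n⟩
      simp [Matrix.one_apply] at this
    · exact h
  let μ₀ : ∀ i : Fin m, Fin (d i) := fun i => ⟨0, hdpos i⟩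
  let v : Matrix (Fin (2 ^ n)) (Fin (2 ^ n)) ℂ :=
    ∑ i, ((c i : ℂ) * (a i (μ₀ i) : ℂ)) • ρs i (μ₀ i)
  let w : ∀ i : Fin m, Fin (d i) → Matrix (Fin (2 ^ n)) (Fin (2 ^ n)) ℂ := fun i μ =>
    (a i μ : ℂ) • ρs i μ - (a i (μ₀ i) : ℂ) • ρs i (μ₀ i)
  -- index type for generators
  let T := Unit ⊕ (Σ i : Fin m, {μ : Fin (d i) // μ ≠ μ₀ i})
  let g : T → Matrix (Fin (2 ^ n)) (Fin (2 ^ n)) ℂ :=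
    Sum.elim (fun _ => v) (fun p => w p.1 p.2.1)
  -- trace identity
  have htr : ∀ ρ : Matrix (Fin (2 ^ n)) (Fin (2 ^ n)) ℂ, ∀ i,
      ∑ μ, (E i μ * ρ).trace = ρ.trace := by
    intro ρ i
    rw [← Matrix.trace_sum, ← Finset.sum_mul, hEsum i, one_mul]
  -- key rewriting per i
  have h2 : ∀ ρ : Matrix (Fin (2 ^ n)) (Fin (2 ^ n)) ℂ, ∀ i,
      ∑ μ, (a i μ : ℂ) • ((E i μ * ρ).trace • ρs i μ)
        = (ρ.trace * (a i (μ₀ i) : ℂ)) • ρs i (μ₀ i)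
            + ∑ μ, (E i μ * ρ).trace • w i μ := by
    intro ρ i
    have hsc : ∀ μ, (a i μ : ℂ) • ((E i μ * ρ).trace • ρs i μ)
        = (E i μ * ρ).trace • ((a i μ : ℂ) • ρs i μ) := fun μ => smul_comm _ _ _
    simp_rw [hsc, w, smul_sub, Finset.sum_sub_distrib, ← Finset.sum_smul, htr ρ i,
      ← smul_smul]
    abel
  -- key identity
  have key : ∀ ρ : Matrix (Fin (2 ^ n)) (Fin (2 ^ n)) ℂ, Γ ρ = ρ.trace • v
      + ∑ i, (c i : ℂ) • ∑ μ, (E i μ * ρ).trace • w i μ := by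
    intro ρ
    rw [hdecomp]
    simp_rw [h2 ρ, smul_add, Finset.sum_add_distrib]
    congr 1
    simp only [v, Finset.smul_sum, smul_smul]
    congr 1
    funext i
    congr 1
    ring
  -- range containment
  have hle : LinearMap.range Γ ≤ Submodule.span ℂ (Set.range g) := by
    rintro x ⟨ρ, rfl⟩
    rw [key]
    apply Submodule.add_mem
    · exact Submodule.smul_mem _ _ (Submodule.subset_span ⟨Sum.inl (), rfl⟩)
    · apply Submodule.sum_mem
      intro i _
      apply Submodule.smul_mem
      apply Submodule.sum_mem
      intro μ _
      apply Submodule.smul_mem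
      by_cases hμ : μ = μ₀ i
      · have hw : w i μ = 0 := by simp [w, hμ]
        rw [hw]; exact Submodule.zero_mem _
      · exact Submodule.subset_span ⟨Sum.inr ⟨i, ⟨μ, hμ⟩⟩, rfl⟩
  -- cardinality bound
  have hcard : Fintype.card T ≤ 1 + m * (2 ^ n - 1) := by
    have hc : Fintype.card T = 1 + ∑ i : Fin m, (d i - 1) := by
      simp [T, Fintype.card_subtype_compl]
    rw [hc]
    gcongr
    calc ∑ i : Fin m, (d i - 1) ≤ ∑ _i : Fin m, (2 ^ n - 1) := by
          apply Finset.sum_le_sum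
          intro i _
          exact Nat.sub_le_sub_right (hd i) 1
      _ = m * (2 ^ n - 1) := by simp [Finset.sum_const, mul_comm]
  calc Module.finrank ℂ ↥(LinearMap.range Γ)
      ≤ Module.finrank ℂ ↥(Submodule.span ℂ (Set.range g)) := Submodule.finrank_mono hle
    _ ≤ Fintype.card T := finrank_range_le_card g
    _ ≤ 1 + m * (2 ^ n - 1) := hcard
end

section
/- If G ⊂ {I,X,Y,Z}^{⊗n} is a set of pairwise commuting Pauli strings containing I^{⊗n} with |G| = 2ⁿ, then φ⁻¹(G) ⊆ {0,1}^{2n} is an 𝔽₂-linear subspace of dimension n. -/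
open Matrix

/-- The 2×2 Pauli `X` matrix, indexed by `ZMod 2`. -/
noncomputable def pauliX : Matrix (ZMod 2) (ZMod 2) ℂ :=
  fun a b => if a = b + 1 then 1 else 0

/-- The 2×2 Pauli `Y` matrix (`Y = −iZX`), indexed by `ZMod 2`. -/
noncomputable def pauliY : Matrix (ZMod 2) (ZMod 2) ℂ :=
  fun a b => if a = b + 1 then Complex.I * (-1 : ℂ) ^ (b.val) else 0

/-- The 2×2 Pauli `Z` matrix, indexed by `ZMod 2`. -/
noncomputable def pauliZ : Matrix (ZMod 2) (ZMod 2) ℂ :=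
  fun a b => if a = b then (-1 : ℂ) ^ (a.val) else 0

/-- The single-qubit operator `(−i)^{zx} Z^z X^x` for `z, x ∈ {0,1}`. -/
noncomputable def singleZX (z x : ZMod 2) : Matrix (ZMod 2) (ZMod 2) ℂ :=
  fun a b => (-Complex.I) ^ (z.val * x.val) *
    (if a = b + x then (-1 : ℂ) ^ (z.val * a.val) else 0)

/-- The binary-vector encoding of `n`-qubit Pauli strings. -/
noncomputable def pauliEnc (n : ℕ) (b : (Fin n → ZMod 2) × (Fin n → ZMod 2)) :
    Matrix (Fin n → ZMod 2) (Fin n → ZMod 2) ℂ :=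
  fun k l => ∏ m : Fin n, singleZX (b.1 m) (b.2 m) (k m) (l m)

/-- The set `{I, X, Y, Z}^{⊗n}` of `n`-qubit Pauli strings. -/
noncomputable def PauliStrings (n : ℕ) :
    Set (Matrix (Fin n → ZMod 2) (Fin n → ZMod 2) ℂ) :=
  {M | ∃ f : Fin n → Matrix (ZMod 2) (ZMod 2) ℂ,
    (∀ m, f m = 1 ∨ f m = pauliX ∨ f m = pauliY ∨ f m = pauliZ) ∧
    ∀ k l, M k l = ∏ m : Fin n, f m (k m) (l m)}

lemma zmod2_cases (z : ZMod 2) : z = 0 ∨ z = 1 := by revert z; decide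

lemma val01 : (0 : ZMod 2).val = 0 ∧ (1 : ZMod 2).val = 1 := by decide

lemma singleZX_00 : singleZX 0 0 = (1 : Matrix (ZMod 2) (ZMod 2) ℂ) := by
  ext a b
  rcases zmod2_cases a with rfl|rfl <;> rcases zmod2_cases b with rfl|rfl <;>
    simp [singleZX, Matrix.one_apply, val01.1, val01.2] <;> norm_num
lemma singleZX_01 : singleZX 0 1 = pauliX := by
  ext a b
  rcases zmod2_cases a with rfl|rfl <;> rcases zmod2_cases b with rfl|rfl <;> simp [singleZX, pauliX, val01.1, val01.2] <;> norm_num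
lemma singleZX_11 : singleZX 1 1 = pauliY := by
  ext a b
  rcases zmod2_cases a with rfl|rfl <;> rcases zmod2_cases b with rfl|rfl <;> simp [singleZX, pauliY, val01.1, val01.2] <;> norm_num
lemma singleZX_10 : singleZX 1 0 = pauliZ := by
  ext a b
  rcases zmod2_cases a with rfl|rfl <;> rcases zmod2_cases b with rfl|rfl <;> simp [singleZX, pauliZ, val01.1, val01.2] <;> norm_num



lemma zadd : (0+0 : ZMod 2) = 0 ∧ (0+1 : ZMod 2) = 1 ∧ (1+0 : ZMod 2) = 1 ∧ (1+1 : ZMod 2) = 0 := by decide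

lemma singleZX_comm (z x z' x' : ZMod 2) :
    singleZX z x * singleZX z' x' =
      ((-1:ℂ) ^ (z.val * x'.val + x.val * z'.val)) • (singleZX z' x' * singleZX z x) := by
  ext a b
  simp only [Matrix.mul_apply, Matrix.smul_apply, smul_eq_mul]
  rcases zmod2_cases z with rfl|rfl <;> rcases zmod2_cases x with rfl|rfl <;>
    rcases zmod2_cases z' with rfl|rfl <;> rcases zmod2_cases x' with rfl|rfl <;>
    rcases zmod2_cases a with rfl|rfl <;> rcases zmod2_cases b with rfl|rfl <;>
    simp [singleZX, Fin.sum_univ_two, val01.1, val01.2, zadd.1, zadd.2.1, zadd.2.2.1,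
      zadd.2.2.2, Complex.ext_iff] <;>
    norm_num

lemma singleZX_mul_ne (z x z' x' c : ZMod 2) :
    (singleZX z' x' * singleZX z x) (c + x + x') c ≠ 0 := by
  simp only [Matrix.mul_apply]
  rcases zmod2_cases z with rfl|rfl <;> rcases zmod2_cases x with rfl|rfl <;>
    rcases zmod2_cases z' with rfl|rfl <;> rcases zmod2_cases x' with rfl|rfl <;>
    rcases zmod2_cases c with rfl|rfl <;>
    simp [singleZX, Fin.sum_univ_two, val01.1, val01.2, zadd.1, zadd.2.1, zadd.2.2.1,
      zadd.2.2.2, Complex.ext_iff] <;>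
    norm_num

lemma singleZX_ne (z x c : ZMod 2) : singleZX z x (c + x) c ≠ 0 := by
  rcases zmod2_cases z with rfl|rfl <;> rcases zmod2_cases x with rfl|rfl <;>
    rcases zmod2_cases c with rfl|rfl <;>
    simp [singleZX, val01.1, val01.2, zadd.1, zadd.2.1, zadd.2.2.1, zadd.2.2.2,
      Complex.ext_iff] <;> norm_num

lemma singleZX_step (z x c : ZMod 2) :
    singleZX z x (x + c + 1) (c + 1) = (-1:ℂ) ^ (z.val) * singleZX z x (x + c) c := by
  rcases zmod2_cases z with rfl|rfl <;> rcases zmod2_cases x with rfl|rfl <;>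
    rcases zmod2_cases c with rfl|rfl <;>
    simp [singleZX, val01.1, val01.2, zadd.1, zadd.2.1, zadd.2.2.1, zadd.2.2.2,
      Complex.ext_iff] <;> norm_num

lemma pauliEnc_ne {n : ℕ} (b : (Fin n → ZMod 2) × (Fin n → ZMod 2)) (l : Fin n → ZMod 2) :
    pauliEnc n b (b.2 + l) l ≠ 0 := by
  unfold pauliEnc
  rw [Finset.prod_ne_zero_iff]
  intro m _
  have : (b.2 + l) m = l m + b.2 m := by simp [add_comm]
  rw [this]
  exact singleZX_ne _ _ _

lemma pauliEnc_eq_zero {n : ℕ} (b : (Fin n → ZMod 2) × (Fin n → ZMod 2))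
    {k l : Fin n → ZMod 2} (h : k ≠ l + b.2) : pauliEnc n b k l = 0 := by
  unfold pauliEnc
  obtain ⟨m, hm⟩ : ∃ m, k m ≠ l m + b.2 m := by
    by_contra hc
    push_neg at hc
    exact h (funext fun m => hc m)
  apply Finset.prod_eq_zero (Finset.mem_univ m)
  simp [singleZX, hm]

lemma pauliEnc_injective (n : ℕ) : Function.Injective (pauliEnc n) := by
  intro b b' h
  have hx : b.2 = b'.2 := by
    by_contra hne
    have h1 : pauliEnc n b (b.2 + 0) 0 ≠ 0 := pauliEnc_ne b 0
    rw [h] at h1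
    exact h1 (pauliEnc_eq_zero b' (by simpa [eq_comm] using hne))
  have hz : b.1 = b'.1 := by
    funext j
    -- key computation
    have key : ∀ c : (Fin n → ZMod 2) × (Fin n → ZMod 2), c.2 = b.2 →
        pauliEnc n c (b.2 + Pi.single j 1) (Pi.single j 1)
          = (-1:ℂ) ^ ((c.1 j).val) * pauliEnc n c (b.2 + 0) 0 := by
      intro c hc
      unfold pauliEnc
      rw [← Finset.mul_prod_erase _ _ (Finset.mem_univ j),
          ← Finset.mul_prod_erase _ _ (Finset.mem_univ j), ← mul_assoc]
      congr 1
      · have e1 : (b.2 + Pi.single j 1 : Fin n → ZMod 2) j = c.2 j + 0 + 1 := by simp [hc]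
        have e2 : (Pi.single j 1 : Fin n → ZMod 2) j = 0 + 1 := by simp
        rw [e1, e2, singleZX_step]
        congr 2
        simp [hc]
      · apply Finset.prod_congr rfl
        intro m hm
        have hmj : m ≠ j := (Finset.mem_erase.mp hm).1
        simp [Pi.single_eq_of_ne hmj]
    have k1 := key b rfl
    have k2 := key b' hx.symm
    rw [h] at k1
    rw [k1] at k2
    have hP : pauliEnc n b' (b.2 + 0) 0 ≠ 0 := by
      have := pauliEnc_ne b' 0
      rwa [← hx] at this
    have : (-1:ℂ) ^ ((b.1 j).val) = (-1:ℂ) ^ ((b'.1 j).val) :=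
      mul_right_cancel₀ hP k2
    rcases zmod2_cases (b.1 j) with h1|h1 <;> rcases zmod2_cases (b'.1 j) with h2|h2 <;>
      rw [h1, h2] <;> rw [h1, h2] at this <;>
      first
        | rfl
        | (exfalso; revert this; norm_num [ZMod.val_one])
  exact Prod.ext hz hx

lemma pauliEnc_mul_apply {n : ℕ} (b c : (Fin n → ZMod 2) × (Fin n → ZMod 2))
    (k l : Fin n → ZMod 2) :
    (pauliEnc n b * pauliEnc n c) k l
      = ∏ m : Fin n, (singleZX (b.1 m) (b.2 m) * singleZX (c.1 m) (c.2 m)) (k m) (l m) := by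
  rw [Matrix.mul_apply]
  unfold pauliEnc
  simp_rw [← Finset.prod_mul_distrib, Matrix.mul_apply]
  rw [← Fintype.piFinset_univ, Finset.prod_univ_sum]

lemma pauliEnc_comm_rel {n : ℕ} (b c : (Fin n → ZMod 2) × (Fin n → ZMod 2)) :
    pauliEnc n b * pauliEnc n c
      = ((-1:ℂ) ^ (∑ m : Fin n, ((b.1 m).val * (c.2 m).val + (b.2 m).val * (c.1 m).val))) •
        (pauliEnc n c * pauliEnc n b) := by
  ext k l
  rw [Matrix.smul_apply, pauliEnc_mul_apply, pauliEnc_mul_apply]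
  simp_rw [singleZX_comm (b.1 _) (b.2 _) (c.1 _) (c.2 _), Matrix.smul_apply, smul_eq_mul]
  rw [Finset.prod_mul_distrib, ← Finset.prod_pow_eq_pow_sum]

noncomputable def sympl (n : ℕ) :
    LinearMap.BilinForm (ZMod 2) ((Fin n → ZMod 2) × (Fin n → ZMod 2)) :=
  LinearMap.mk₂ (ZMod 2) (fun p q => p.1 ⬝ᵥ q.2 + p.2 ⬝ᵥ q.1)
    (by intros; simp [add_dotProduct]; ring)
    (by intros; simp [smul_dotProduct]; ring)
    (by intros; simp [dotProduct_add]; ring)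
    (by intros; simp [dotProduct_smul]; ring)

lemma sympl_apply {n : ℕ} (p q : (Fin n → ZMod 2) × (Fin n → ZMod 2)) :
    sympl n p q = p.1 ⬝ᵥ q.2 + p.2 ⬝ᵥ q.1 := rfl

lemma sympl_isSymm (n : ℕ) : (sympl n).IsSymm := by
  rw [LinearMap.BilinForm.isSymm_def]
  intro p q
  simp [sympl_apply, dotProduct_comm]
  ring

lemma sympl_nondeg (n : ℕ) : (sympl n).Nondegenerate := by
  apply LinearMap.BilinForm.Nondegenerate.ofSeparatingLeft
  intro p hp
  have h1 : ∀ j, p.1 j = 0 := by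
    intro j
    have := hp (0, Pi.single j 1)
    simpa [sympl_apply, dotProduct_single] using this
  have h2 : ∀ j, p.2 j = 0 := by
    intro j
    have := hp (Pi.single j 1, 0)
    simpa [sympl_apply, single_dotProduct] using this
  exact Prod.ext (funext h1) (funext h2)

lemma sympl_eq_zero_of_commute {n : ℕ} (b c : (Fin n → ZMod 2) × (Fin n → ZMod 2))
    (h : Commute (pauliEnc n b) (pauliEnc n c)) : sympl n b c = 0 := by
  set N : ℕ := ∑ m : Fin n, ((b.1 m).val * (c.2 m).val + (b.2 m).val * (c.1 m).val) with hN
  have hrel := pauliEnc_comm_rel b c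
  have hcomm : pauliEnc n b * pauliEnc n c = pauliEnc n c * pauliEnc n b := h
  rw [hcomm] at hrel
  -- evaluate at a nonzero entry
  have hnz : (pauliEnc n c * pauliEnc n b) (b.2 + c.2) 0 ≠ 0 := by
    rw [pauliEnc_mul_apply, Finset.prod_ne_zero_iff]
    intro m _
    have e : (b.2 + c.2 : Fin n → ZMod 2) m = (0 : Fin n → ZMod 2) m + b.2 m + c.2 m := by
      simp
    rw [e]
    exact singleZX_mul_ne _ _ _ _ _
  have heval := congrFun (congrFun hrel (b.2 + c.2)) 0
  rw [Matrix.smul_apply, smul_eq_mul] at heval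
  have hpow : ((-1:ℂ)) ^ N = 1 := by
    nth_rewrite 1 [← one_mul ((pauliEnc n c * pauliEnc n b) (b.2 + c.2) 0)] at heval
    exact (mul_right_cancel₀ hnz heval.symm)
  have hev : Even N := by
    rwa [neg_one_pow_eq_one_iff_even (by norm_num : (-1:ℂ) ≠ 1)] at hpow
  have : sympl n b c = ((N : ℕ) : ZMod 2) := by
    rw [sympl_apply, hN, Nat.cast_sum]
    simp only [Nat.cast_add, Nat.cast_mul, ZMod.natCast_val, ZMod.cast_id]
    rw [Finset.sum_add_distrib]
    simp [dotProduct]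
  rw [this, ZMod.natCast_eq_zero_iff]
  exact hev.two_dvd

lemma pauliStrings_eq_range (n : ℕ) : PauliStrings n = Set.range (pauliEnc n) := by
  ext M
  constructor
  · rintro ⟨f, hf, hM⟩
    classical
    let b : Fin n → ZMod 2 × ZMod 2 := fun m =>
      if f m = 1 then (0, 0) else if f m = pauliX then (0, 1)
      else if f m = pauliY then (1, 1) else (1, 0)
    have hb : ∀ m, singleZX (b m).1 (b m).2 = f m := by
      intro m
      by_cases h1 : f m = 1
      · simp only [b]
        rw [if_pos h1, h1]
        exact singleZX_00
      by_cases h2 : f m = pauliX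
      · simp only [b]
        rw [if_neg h1, if_pos h2, h2]
        exact singleZX_01
      by_cases h3 : f m = pauliY
      · simp only [b]
        rw [if_neg h1, if_neg h2, if_pos h3, h3]
        exact singleZX_11
      · have h4 : f m = pauliZ := by
          rcases hf m with h | h | h | h <;> tauto
        simp only [b]
        rw [if_neg h1, if_neg h2, if_neg h3, h4]
        exact singleZX_10
    refine ⟨(fun m => (b m).1, fun m => (b m).2), ?_⟩
    ext k l
    unfold pauliEnc
    rw [hM k l]
    exact Finset.prod_congr rfl fun m _ => by rw [← hb m]
  · rintro ⟨b, rfl⟩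
    refine ⟨fun m => singleZX (b.1 m) (b.2 m), fun m => ?_, fun k l => rfl⟩
    rcases zmod2_cases (b.1 m) with h1 | h1 <;> rcases zmod2_cases (b.2 m) with h2 | h2 <;>
      simp [h1, h2, singleZX_00, singleZX_01, singleZX_11, singleZX_10]


/-- If `G ⊆ {I,X,Y,Z}^{⊗n}` is a set of pairwise commuting Pauli strings containing
`I^{⊗n}` with `|G| = 2ⁿ`, then `φ⁻¹(G) ⊆ {0,1}^{2n}` is an `𝔽₂`-linear subspace of
dimension `n`. -/
theorem preimage_maximally_commuting_family_is_subspace (n : ℕ)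
    (G : Set (Matrix (Fin n → ZMod 2) (Fin n → ZMod 2) ℂ))
    (hGsub : G ⊆ PauliStrings n)
    (hGone : (1 : Matrix (Fin n → ZMod 2) (Fin n → ZMod 2) ℂ) ∈ G)
    (hGcomm : ∀ P ∈ G, ∀ Q ∈ G, Commute P Q)
    (hGcard : G.ncard = 2 ^ n) :
    ∃ V : Submodule (ZMod 2) ((Fin n → ZMod 2) × (Fin n → ZMod 2)),
      (V : Set ((Fin n → ZMod 2) × (Fin n → ZMod 2))) = pauliEnc n ⁻¹' G ∧
      Module.finrank (ZMod 2) V = n := by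
  classical
  set W := (Fin n → ZMod 2) × (Fin n → ZMod 2)
  set S : Set W := pauliEnc n ⁻¹' G with hS
  have hGrange : G ⊆ Set.range (pauliEnc n) := by
    rw [← pauliStrings_eq_range]; exact hGsub
  have hSimage : pauliEnc n '' S = G := Set.image_preimage_eq_of_subset hGrange
  have hScard : S.ncard = 2 ^ n := by
    rw [← hGcard, ← hSimage, Set.ncard_image_of_injective _ (pauliEnc_injective n)]
  -- S is pairwise isotropic
  have hSiso : ∀ p ∈ S, ∀ q ∈ S, sympl n p q = 0 := by
    intro p hp q hq
    exact sympl_eq_zero_of_commute p q (hGcomm _ hp _ hq)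
  set V : Submodule (ZMod 2) W := Submodule.span (ZMod 2) S with hV
  have hSV : S ⊆ (V : Set W) := Submodule.subset_span
  -- V is isotropic
  have hViso : V ≤ (sympl n).orthogonal V := by
    rw [hV, Submodule.span_le]
    intro q hq
    intro p hp
    refine Submodule.span_induction (p := fun w _ => sympl n w q = 0) ?_ ?_ ?_ ?_ hp
    · intro s hs; exact hSiso s hs q hq
    · simp
    · intro a b _ _ ha hb; simp [map_add, ha, hb]
    · intro c a _ ha; simp [ha]
  have hrefl : (sympl n).IsRefl := (sympl_isSymm n).isRefl
  have hdim_amb : Module.finrank (ZMod 2) W = n + n := by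
    rw [Module.finrank_prod, Module.finrank_pi]
    simp
  have hdimV : Module.finrank (ZMod 2) V ≤ n := by
    have h1 := Submodule.finrank_mono hViso
    rw [LinearMap.BilinForm.finrank_orthogonal (sympl_nondeg n) V, hdim_amb] at h1
    have h1' : Module.finrank (ZMod 2) V ≤ n + n - Module.finrank (ZMod 2) V := h1
    omega
  -- cardinality
  have : Fintype W := by infer_instance
  have hfin : Fintype V := Fintype.ofFinite _
  have hcardV : Nat.card V = 2 ^ (Module.finrank (ZMod 2) V) := by
    rw [Nat.card_eq_fintype_card, Module.card_eq_pow_finrank (K := ZMod 2) (V := V), ZMod.card]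
  have hVncard : (V : Set W).ncard = 2 ^ (Module.finrank (ZMod 2) V) := by
    rw [← Nat.card_coe_set_eq, ← hcardV]
    rfl
  have hle : (V : Set W).ncard ≤ S.ncard := by
    rw [hVncard, hScard]
    exact Nat.pow_le_pow_right (by norm_num) hdimV
  have hSeq : S = (V : Set W) :=
    Set.eq_of_subset_of_ncard_le hSV hle (Set.toFinite _)
  have hrank : Module.finrank (ZMod 2) V = n := by
    have : (2:ℕ) ^ (Module.finrank (ZMod 2) V) = 2 ^ n := by
      rw [← hVncard, ← hSeq, hScard]
    exact Nat.pow_right_injective (le_refl 2) this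
  exact ⟨V, hSeq.symm, hrank⟩
end
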